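/- Discrete energy relation with forcing for the semi-discrete SAV scheme: if (u^{n+1}, p^{n+1/2}, q^{n+1}) with u^{n+1} ∈ H¹₀(Ω)^d solves one step of the semi-discrete SAV/Crank–Nicolson scheme, and u^n is divergence-free, then ((q^{n+1})² − (q^n)²)/Δt + ν‖∇u^{n+1/2}‖²_{L²(Ω)} = (f^{n+1/2}, u^{n+1/2}), where u^{n+1/2}=(u^n+u^{n+1})/2. -/

import Mathlib

open MeasureTheory

noncomputable section

namespace SAVNS

variable {d : ℕ}

/-- Partial derivative `∂ᵢ g` of a scalar field on `ℝ^d`. -/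
def pd (g : (Fin d → ℝ) → ℝ) (i : Fin d) (x : Fin d → ℝ) : ℝ :=
  fderiv ℝ g x (Pi.single i 1)

/-- Divergence `∇·u` of a vector field. -/
def vdiv (u : (Fin d → ℝ) → (Fin d → ℝ)) (x : Fin d → ℝ) : ℝ :=
  ∑ i, pd (fun y => u y i) i x

/-- Laplacian `Δg` of a scalar field. -/
def lap (g : (Fin d → ℝ) → ℝ) (x : Fin d → ℝ) : ℝ :=
  ∑ i, pd (fun y => pd g i y) i x

/-- The `i`-th component of the convection term `(u·∇)v`. -/
def conv (u v : (Fin d → ℝ) → (Fin d → ℝ)) (x : Fin d → ℝ) (i : Fin d) : ℝ :=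
  ∑ j, u x j * pd (fun y => v y i) j x

/-- `|∇u|²` (pointwise). -/
def gradSq (u : (Fin d → ℝ) → (Fin d → ℝ)) (x : Fin d → ℝ) : ℝ :=
  ∑ i, ∑ j, (pd (fun y => u y i) j x) ^ 2

/-- `Σᵢⱼ ∂ⱼuᵢ ∂ⱼvᵢ` (pointwise), so that `∫_Ω` of it is `(∇u, ∇v)`. -/
def gradIP (u v : (Fin d → ℝ) → (Fin d → ℝ)) (x : Fin d → ℝ) : ℝ :=
  ∑ i, ∑ j, pd (fun y => u y i) j x * pd (fun y => v y i) j x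

/-- The `L²(Ω)` inner product of two vector fields. -/
def ipL2 (Ω : Set (Fin d → ℝ)) (u v : (Fin d → ℝ) → (Fin d → ℝ)) : ℝ :=
  ∫ x in Ω, ∑ i, u x i * v x i

/-- The total energy `E(u) = ½∫_Ω |u|²`. -/
def energy (Ω : Set (Fin d → ℝ)) (u : (Fin d → ℝ) → (Fin d → ℝ)) : ℝ :=
  (1 / 2) * ∫ x in Ω, ∑ i, (u x i) ^ 2

/-- The extrapolated velocity `ũ^{n+1/2} = (3uⁿ - u^{n-1})/2`. -/
def utilde (un um : (Fin d → ℝ) → (Fin d → ℝ)) : (Fin d → ℝ) → (Fin d → ℝ) :=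
  fun x i => (3 * un x i - um x i) / 2

/-- The Crank–Nicolson average `u^{n+1/2} = (uⁿ + u^{n+1})/2`. -/
def uhalf (un uv : (Fin d → ℝ) → (Fin d → ℝ)) : (Fin d → ℝ) → (Fin d → ℝ) :=
  fun x i => (un x i + uv x i) / 2

/-- One step of the semi-discrete SAV/Crank–Nicolson scheme for the Navier–Stokes
equations: given divergence-free `uⁿ = un`, `u^{n-1} = um` in `H¹₀(Ω)^d` and `qⁿ = qn`,
the new iterate `u^{n+1} = uv ∈ H¹₀(Ω)^d`, `p^{n+1/2} = p`, `q^{n+1} = qv`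
(with `q^{n+1/2} ≠ 0`) satisfies the momentum equation, the SAV update and `∇·u^{n+1} = 0`. -/
def SAVStep (Ω : Set (Fin d → ℝ)) (ν δ Δt : ℝ)
    (f un um uv : (Fin d → ℝ) → (Fin d → ℝ)) (p : (Fin d → ℝ) → ℝ) (qn qv : ℝ) : Prop :=
  (qn + qv) / 2 ≠ 0 ∧
  (∀ x ∈ Ω, ∀ i : Fin d,
    (uv x i - un x i) / Δt
      + ((qn + qv) / 2 / Real.sqrt (energy Ω (utilde un um) + δ)) *
          conv (utilde un um) (utilde un um) x i
      - ν * lap (fun y => uhalf un uv y i) x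
      + pd p i x = f x i) ∧
  ((qv - qn) / Δt
      = (1 / (2 * ((qn + qv) / 2))) *
          ipL2 Ω (fun y i => (uv y i - un y i) / Δt) (uhalf un uv)
        + (1 / (2 * Real.sqrt (energy Ω (utilde un um) + δ))) *
          ipL2 Ω (conv (utilde un um) (utilde un um)) (uhalf un uv)) ∧
  (∀ x ∈ Ω, vdiv uv x = 0) ∧
  ContDiff ℝ (⊤ : ℕ∞) (fun x => uv x) ∧ (∀ x ∈ frontier Ω, ∀ i, uv x i = 0)

end SAVNS

section AuxOneDim
open Set

lemma comp_eq_Ioo {S : Set ℝ} (hSo : IsOpen S) (hSc : IsPreconnected S)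
    (hSb : Bornology.IsBounded S) (hne : S.Nonempty) :
    S = Ioo (sInf S) (sSup S) := by
  have hbb : BddBelow S := hSb.bddBelow
  have hba : BddAbove S := hSb.bddAbove
  ext z
  constructor
  · intro hz
    obtain ⟨ε, hε, hball⟩ := Metric.isOpen_iff.1 hSo z hz
    have h1 : z - ε/2 ∈ S := hball (by rw [Metric.mem_ball, Real.dist_eq, abs_lt]; constructor <;> linarith)
    have h2 : z + ε/2 ∈ S := hball (by rw [Metric.mem_ball, Real.dist_eq, abs_lt]; constructor <;> linarith)
    exact ⟨lt_of_le_of_lt (csInf_le hbb h1) (by linarith),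
      lt_of_lt_of_le (by linarith) (le_csSup hba h2)⟩
  · rintro ⟨h1, h2⟩
    obtain ⟨s, hs, hsz⟩ : ∃ s ∈ S, s < z := by
      by_contra hc
      push_neg at hc
      exact absurd (le_csInf hne hc) (not_le.2 h1)
    obtain ⟨t, ht, hzt⟩ : ∃ t ∈ S, z < t := by
      by_contra hc
      push_neg at hc
      exact absurd (csSup_le hne hc) (not_le.2 h2)
    exact hSc.ordConnected.out hs ht ⟨hsz.le, hzt.le⟩

lemma integral_deriv_zero_1d (U : Set ℝ) (hU : IsOpen U) (hb : Bornology.IsBounded U)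
    (h : ℝ → ℝ) (hh : ContDiff ℝ (⊤ : ℕ∞) h) (hbc : ∀ t ∈ frontier U, h t = 0) :
    ∫ t in U, deriv h t = 0 := by
  classical
  -- components indexed by the set of components
  set Q : Set (Set ℝ) := {S | ∃ x ∈ U, S = connectedComponentIn U x} with hQ
  have hcomp_eq : ∀ {x z : ℝ}, z ∈ connectedComponentIn U x →
      connectedComponentIn U z = connectedComponentIn U x :=
    fun hz => (connectedComponentIn_eq hz).symm
  have hQsub : ∀ S ∈ Q, S ⊆ U := by
    rintro S ⟨x, hx, rfl⟩
    exact connectedComponentIn_subset U x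
  -- each member of Q
  have hmem : ∀ S ∈ Q, IsOpen S ∧ S.Nonempty ∧ IsPreconnected S := by
    rintro S ⟨x, hx, rfl⟩
    exact ⟨hU.connectedComponentIn, ⟨x, mem_connectedComponentIn hx⟩,
      isPreconnected_connectedComponentIn⟩
  -- countability
  have hQc : Q.Countable := by
    have : Q ⊆ Set.range (fun q : ℚ => connectedComponentIn U (q : ℝ)) := by
      rintro S ⟨x, hx, rfl⟩
      have : ∃ q : ℚ, (q : ℝ) ∈ connectedComponentIn U x := by
        obtain ⟨ho, ⟨y, hy⟩, _⟩ := hmem _ ⟨x, hx, rfl⟩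
        obtain ⟨q, hq⟩ := Rat.denseRange_cast.exists_mem_open ho ⟨y, hy⟩
        exact ⟨q, hq⟩
      obtain ⟨q, hq⟩ := this
      exact ⟨q, hcomp_eq hq⟩
    exact (Set.countable_range _).mono this
  have hdisj : ∀ S ∈ Q, ∀ T ∈ Q, S ≠ T → Disjoint S T := by
    rintro S hS T hT hne
    rw [Set.disjoint_left]
    intro z hzS hzT
    obtain ⟨x, hx, rfl⟩ := hS
    obtain ⟨y, hy, rfl⟩ := hT
    exact hne ((hcomp_eq hzS).symm.trans (hcomp_eq hzT))
  have hunion : ⋃₀ Q = U := by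
    apply Set.Subset.antisymm
    · exact Set.sUnion_subset hQsub
    · intro x hx
      exact ⟨connectedComponentIn U x, ⟨x, hx, rfl⟩, mem_connectedComponentIn hx⟩
  -- each component integral vanishes
  have hcompint : ∀ S ∈ Q, ∫ t in S, deriv h t = 0 := by
    intro S hS
    obtain ⟨ho, hne, hpc⟩ := hmem S hS
    have hSb : Bornology.IsBounded S := hb.subset (hQsub S hS)
    have hIoo := comp_eq_Ioo ho hpc hSb hne
    set a := sInf S
    set b := sSup S
    obtain ⟨x, hx⟩ := id hne
    have hab : a < b := by
      rw [hIoo] at hx; exact lt_trans hx.1 hx.2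
    -- endpoints in frontier
    have hfr : ∀ c ∈ closure S, c ∉ U → c ∈ frontier U := by
      intro c hc hcU
      rw [frontier_eq_closure_inter_closure]
      exact ⟨(closure_mono (hQsub S hS)) hc, subset_closure hcU⟩
    have hnotU : ∀ c ∈ closure S, c ∈ U → c ∈ S := by
      intro c hc hcU
      have hop : connectedComponentIn U c ∈ nhds c :=
        (hU.connectedComponentIn).mem_nhds (mem_connectedComponentIn hcU)
      obtain ⟨z, hz1, hz2⟩ := mem_closure_iff_nhds.1 hc _ hop
      obtain ⟨y, hy, rfl⟩ := hS
      rw [← hcomp_eq hz2, hcomp_eq hz1]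
      exact mem_connectedComponentIn hcU
    have haF : h a = 0 := by
      have hacl : a ∈ closure S := csInf_mem_closure hne hSb.bddBelow
      refine hbc a (hfr a hacl ?_)
      intro haU
      have := hnotU a hacl haU
      rw [hIoo] at this
      exact lt_irrefl a this.1
    have hbF : h b = 0 := by
      have hbcl : b ∈ closure S := csSup_mem_closure hne hSb.bddAbove
      refine hbc b (hfr b hbcl ?_)
      intro hbU
      have := hnotU b hbcl hbU
      rw [hIoo] at this
      exact lt_irrefl b this.2
    rw [hIoo, ← MeasureTheory.integral_Ioc_eq_integral_Ioo,
      ← intervalIntegral.integral_of_le hab.le]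
    rw [intervalIntegral.integral_deriv_eq_sub
      (fun x _ => (hh.differentiable (by simp)).differentiableAt)
      ((hh.continuous_deriv (by simp)).intervalIntegrable a b)]
    rw [haF, hbF, sub_zero]
  -- assemble
  have hQcount : Countable ↥Q := hQc.to_subtype
  have hmeas : ∀ S : ↥Q, MeasurableSet (S : Set ℝ) := fun S => (hmem S S.2).1.measurableSet
  have hpw : Pairwise (Function.onFun Disjoint (fun S : ↥Q => (S : Set ℝ))) := by
    intro S T hST
    exact hdisj S S.2 T T.2 (fun h => hST (Subtype.ext h))
  have hint : IntegrableOn (deriv h) U := by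
    have : IntegrableOn (deriv h) (closure U) :=
      ((hh.continuous_deriv (by simp)).continuousOn).integrableOn_compact hb.isCompact_closure
    exact this.mono_set subset_closure
  have hUeq : U = ⋃ S : ↥Q, (S : Set ℝ) := by rw [← hunion, Set.sUnion_eq_iUnion]
  rw [hUeq] at hint ⊢
  rw [MeasureTheory.integral_iUnion hmeas hpw hint]
  simp only [fun S : ↥Q => hcompint S S.2]
  exact tsum_zero
end AuxOneDim

namespace SAVNS
open Set
variable {d : ℕ}
lemma contDiff_pd {g : (Fin d → ℝ) → ℝ} (hg : ContDiff ℝ (⊤ : ℕ∞) g) (i : Fin d) :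
    ContDiff ℝ (⊤ : ℕ∞) (pd g i) :=
  (hg.fderiv_right (by simp)).clm_apply contDiff_const

lemma continuous_pd {g : (Fin d → ℝ) → ℝ} (hg : ContDiff ℝ (⊤ : ℕ∞) g) (i : Fin d) :
    Continuous (pd g i) :=
  (contDiff_pd hg i).continuous

lemma insertNth_eq_affine {n : ℕ} (j : Fin (n + 1)) (y : Fin n → ℝ) (t : ℝ) :
    Fin.insertNth (α := fun _ => ℝ) j t y = Fin.insertNth (α := fun _ => ℝ) j 0 y + t • (Pi.single j 1 : Fin (n+1) → ℝ) := by
  ext k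
  refine j.succAboveCases ?_ ?_ k
  · simp
  · intro k
    simp [Pi.single_eq_of_ne (Fin.succAbove_ne j k)]

lemma contDiff_insertNth {n : ℕ} (j : Fin (n + 1)) (y : Fin n → ℝ) :
    ContDiff ℝ (⊤ : ℕ∞) (fun t : ℝ => Fin.insertNth (α := fun _ => ℝ) j t y) := by
  have : (fun t : ℝ => Fin.insertNth (α := fun _ => ℝ) j t y) = fun t => Fin.insertNth (α := fun _ => ℝ) j 0 y + t • (Pi.single j 1 : Fin (n+1) → ℝ) := by
    funext t; exact insertNth_eq_affine j y t
  rw [this]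
  exact contDiff_const.add (contDiff_id.smul contDiff_const)

lemma hasDerivAt_slice {n : ℕ} {g : (Fin (n + 1) → ℝ) → ℝ} (hg : ContDiff ℝ (⊤ : ℕ∞) g)
    (j : Fin (n + 1)) (y : Fin n → ℝ) (t : ℝ) :
    HasDerivAt (fun s => g (Fin.insertNth (α := fun _ => ℝ) j s y)) (pd g j (Fin.insertNth (α := fun _ => ℝ) j t y)) t := by
  have h1 : HasDerivAt (fun s : ℝ => Fin.insertNth (α := fun _ => ℝ) j s y) (Pi.single j 1) t := by
    have : (fun s : ℝ => Fin.insertNth (α := fun _ => ℝ) j s y) = fun s => Fin.insertNth (α := fun _ => ℝ) j 0 y + s • (Pi.single j 1 : Fin (n+1) → ℝ) := by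
      funext s; exact insertNth_eq_affine j y s
    rw [this]
    simpa using ((hasDerivAt_id t).smul_const (Pi.single j (1:ℝ))).const_add (Fin.insertNth (α := fun _ => ℝ) j 0 y)
  have h2 : HasFDerivAt g (fderiv ℝ g (Fin.insertNth (α := fun _ => ℝ) j t y)) (Fin.insertNth (α := fun _ => ℝ) j t y) :=
    (hg.differentiable (by simp)).differentiableAt.hasFDerivAt
  exact h2.comp_hasDerivAt t h1


lemma integrableOn_of_continuous
    {s : Set (Fin d → ℝ)} (hs : Bornology.IsBounded s) {f : (Fin d → ℝ) → ℝ}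
    (hf : Continuous f) : IntegrableOn f s := by
  exact (hf.continuousOn.integrableOn_compact hs.isCompact_closure).mono_set subset_closure

lemma integral_pd_zero (Ω : Set (Fin d → ℝ)) (hΩo : IsOpen Ω) (hΩb : Bornology.IsBounded Ω)
    (g : (Fin d → ℝ) → ℝ) (hg : ContDiff ℝ (⊤ : ℕ∞) g) (hbc : ∀ x ∈ frontier Ω, g x = 0) (j : Fin d) :
    ∫ x in Ω, pd g j x = 0 := by
  cases d with
  | zero => exact j.elim0
  | succ n =>
    have hpdc : Continuous (pd g j) := (contDiff_pd hg j).continuous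
    have hintOn : IntegrableOn (pd g j) Ω := integrableOn_of_continuous hΩb hpdc
    have hint : Integrable (Ω.indicator (pd g j)) :=
      hintOn.integrable_indicator hΩo.measurableSet
    rw [← integral_indicator hΩo.measurableSet]
    set e := MeasurableEquiv.piFinSuccAbove (fun _ : Fin (n + 1) => ℝ) j with he
    have hmp : MeasurePreserving e volume
        ((volume : Measure ℝ).prod (volume : Measure (Fin n → ℝ))) := by
      have := measurePreserving_piFinSuccAbove (fun _ : Fin (n + 1) => (volume : Measure ℝ)) j
      exact this
    have hcomp : ∫ x, Ω.indicator (pd g j) x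
        = ∫ z, Ω.indicator (pd g j) (e.symm z)
            ∂((volume : Measure ℝ).prod (volume : Measure (Fin n → ℝ))) := by
      rw [← (hmp.symm e).integral_comp e.symm.measurableEmbedding]
    rw [hcomp]
    have hint2 : Integrable (fun z => Ω.indicator (pd g j) (e.symm z))
        ((volume : Measure ℝ).prod (volume : Measure (Fin n → ℝ))) :=
      ((hmp.symm e).integrable_comp_emb e.symm.measurableEmbedding).2 hint
    rw [MeasureTheory.integral_prod_symm _ hint2]
    have hinner : ∀ y : Fin n → ℝ,
        (∫ t : ℝ, Ω.indicator (pd g j) (e.symm (t, y))) = 0 := by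
      intro y
      have hesymm : ∀ t : ℝ, e.symm (t, y) = Fin.insertNth (α := fun _ => ℝ) j t y := by
        intro t
        simp [he, MeasurableEquiv.piFinSuccAbove_symm_apply, Fin.insertNthEquiv]
      set ins : ℝ → (Fin (n + 1) → ℝ) := fun t => Fin.insertNth (α := fun _ => ℝ) j t y with hins
      have hinsc : Continuous ins := (contDiff_insertNth j y).continuous
      set U : Set ℝ := ins ⁻¹' Ω with hU
      have hUo : IsOpen U := hΩo.preimage hinsc
      have hUb : Bornology.IsBounded U := by
        obtain ⟨R, hR⟩ := hΩb.subset_closedBall 0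
        refine (Metric.isBounded_closedBall (x := (0:ℝ)) (r := R)).subset ?_
        intro t ht
        have h1 : ins t ∈ Metric.closedBall 0 R := hR ht
        simp only [Metric.mem_closedBall, dist_zero_right] at h1 ⊢
        calc ‖t‖ = ‖ins t j‖ := by simp [hins]
          _ ≤ ‖ins t‖ := norm_le_pi_norm (ins t) j
          _ ≤ R := h1
      set h : ℝ → ℝ := fun t => g (ins t) with hh
      have hhc : ContDiff ℝ (⊤ : ℕ∞) h := hg.comp (contDiff_insertNth j y)
      have hbd : ∀ t ∈ frontier U, h t = 0 := by
        intro t ht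
        rw [hUo.frontier_eq] at ht
        obtain ⟨ht1, ht2⟩ := ht
        have hcl : ins t ∈ closure Ω := hinsc.closure_preimage_subset Ω ht1
        exact hbc _ (by rw [hΩo.frontier_eq]; exact ⟨hcl, ht2⟩)
      have key := integral_deriv_zero_1d U hUo hUb h hhc hbd
      have hderiv : ∀ t, deriv h t = pd g j (ins t) := fun t =>
        (hasDerivAt_slice hg j y t).deriv
      calc (∫ t : ℝ, Ω.indicator (pd g j) (e.symm (t, y)))
          = ∫ t : ℝ, U.indicator (fun t => pd g j (ins t)) t := by
            congr 1
        _ = ∫ t in U, pd g j (ins t) := integral_indicator hUo.measurableSet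
        _ = ∫ t in U, deriv h t := by
            refine setIntegral_congr_fun hUo.measurableSet ?_
            intro t _
            exact (hderiv t).symm
        _ = 0 := key
    simp only [hinner, integral_zero]

lemma pd_mul {f g : (Fin d → ℝ) → ℝ} (hf : ContDiff ℝ (⊤ : ℕ∞) f) (hg : ContDiff ℝ (⊤ : ℕ∞) g)
    (i : Fin d) (x : Fin d → ℝ) :
    pd (fun y => f y * g y) i x = pd f i x * g x + f x * pd g i x := by
  unfold pd
  rw [fderiv_fun_mul ((hf.differentiable (by simp)).differentiableAt)
    ((hg.differentiable (by simp)).differentiableAt)]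
  simp [mul_comm]
  ring

lemma pd_sum {ι : Type*} (s : Finset ι) (f : ι → (Fin d → ℝ) → ℝ)
    (hf : ∀ k ∈ s, ContDiff ℝ (⊤ : ℕ∞) (f k)) (i : Fin d) (x : Fin d → ℝ) :
    pd (fun y => ∑ k ∈ s, f k y) i x = ∑ k ∈ s, pd (f k) i x := by
  unfold pd
  rw [fderiv_fun_sum (fun k hk => ((hf k hk).differentiable (by simp)).differentiableAt)]
  simp

-- divergence lemma
lemma integral_vdiv_zero (Ω : Set (Fin d → ℝ)) (hΩo : IsOpen Ω) (hΩb : Bornology.IsBounded Ω)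
    (F : (Fin d → ℝ) → (Fin d → ℝ)) (hF : ∀ i, ContDiff ℝ (⊤ : ℕ∞) (fun x => F x i))
    (hbc : ∀ x ∈ frontier Ω, ∀ i, F x i = 0) :
    ∫ x in Ω, vdiv F x = 0 := by
  unfold vdiv
  rw [integral_finset_sum]
  · refine Finset.sum_eq_zero fun j _ => ?_
    exact integral_pd_zero Ω hΩo hΩb _ (hF j) (fun x hx => hbc x hx j) j
  · intro j _
    exact integrableOn_of_continuous hΩb (contDiff_pd (hF j) j).continuous

-- corollary A : pressure term
lemma integral_gradp_dot_zero (Ω : Set (Fin d → ℝ)) (hΩo : IsOpen Ω)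
    (hΩb : Bornology.IsBounded Ω) (p : (Fin d → ℝ) → ℝ) (hp : ContDiff ℝ (⊤ : ℕ∞) p)
    (w : (Fin d → ℝ) → (Fin d → ℝ)) (hw : ∀ i, ContDiff ℝ (⊤ : ℕ∞) (fun x => w x i))
    (hbcw : ∀ x ∈ frontier Ω, ∀ i, w x i = 0) (hdivw : ∀ x ∈ Ω, vdiv w x = 0) :
    ∫ x in Ω, (∑ i, pd p i x * w x i) = 0 := by
  have hKL := integral_vdiv_zero Ω hΩo hΩb (fun x i => p x * w x i)
    (fun i => hp.mul (hw i)) (fun x hx i => by show p x * w x i = 0; rw [hbcw x hx i, mul_zero])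
  rw [← hKL]
  refine setIntegral_congr_fun hΩo.measurableSet fun x hx => ?_
  have : vdiv (fun y i => p y * w y i) x
      = (∑ i, pd p i x * w x i) + p x * vdiv w x := by
    unfold vdiv
    rw [Finset.mul_sum, ← Finset.sum_add_distrib]
    exact Finset.sum_congr rfl fun i _ => pd_mul hp (hw i) i x
  rw [this, hdivw x hx, mul_zero, add_zero]

-- corollary B : viscous term
lemma integral_lap_dot (Ω : Set (Fin d → ℝ)) (hΩo : IsOpen Ω)
    (hΩb : Bornology.IsBounded Ω)
    (w : (Fin d → ℝ) → (Fin d → ℝ)) (hw : ∀ i, ContDiff ℝ (⊤ : ℕ∞) (fun x => w x i))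
    (hbcw : ∀ x ∈ frontier Ω, ∀ i, w x i = 0) :
    ∫ x in Ω, (gradSq w x + ∑ i, w x i * lap (fun y => w y i) x) = 0 := by
  have hKL := integral_vdiv_zero Ω hΩo hΩb
    (fun x j => ∑ i, w x i * pd (fun y => w y i) j x)
    (fun j => ContDiff.sum fun i _ => (hw i).mul (contDiff_pd (hw i) j))
    (fun x hx j => by show (∑ i, w x i * pd (fun y => w y i) j x) = 0; exact Finset.sum_eq_zero fun i _ => by rw [hbcw x hx i, zero_mul])
  rw [← hKL]
  refine setIntegral_congr_fun hΩo.measurableSet fun x _ => ?_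
  have : vdiv (fun x j => ∑ i, w x i * pd (fun y => w y i) j x) x
      = gradSq w x + ∑ i, w x i * lap (fun y => w y i) x := by
    unfold vdiv
    have hstep : ∀ j : Fin d,
        pd (fun y => ∑ i, w y i * pd (fun z => w z i) j y) j x
          = ∑ i, (pd (fun y => w y i) j x * pd (fun y => w y i) j x
              + w x i * pd (fun y => pd (fun z => w z i) j y) j x) := by
      intro j
      rw [pd_sum Finset.univ (fun i y => w y i * pd (fun z => w z i) j y)
        (fun i _ => (hw i).mul (contDiff_pd (hw i) j)) j x]
      exact Finset.sum_congr rfl fun i _ => pd_mul (hw i) (contDiff_pd (hw i) j) j x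
    calc ∑ j, pd (fun y => ∑ i, w y i * pd (fun z => w z i) j y) j x
        = ∑ j, ∑ i, (pd (fun y => w y i) j x * pd (fun y => w y i) j x
            + w x i * pd (fun y => pd (fun z => w z i) j y) j x) :=
          Finset.sum_congr rfl fun j _ => hstep j
      _ = (∑ j : Fin d, ∑ i, pd (fun y => w y i) j x * pd (fun y => w y i) j x)
          + ∑ j : Fin d, ∑ i, w x i * pd (fun y => pd (fun z => w z i) j y) j x := by
          rw [← Finset.sum_add_distrib]
          exact Finset.sum_congr rfl fun j _ => Finset.sum_add_distrib
      _ = gradSq w x + ∑ i, w x i * lap (fun y => w y i) x := by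
          unfold gradSq lap
          rw [Finset.sum_comm, Finset.sum_comm
            (f := fun j i => w x i * pd (fun y => pd (fun z => w z i) j y) j x)]
          congr 1
          · exact Finset.sum_congr rfl fun i _ => Finset.sum_congr rfl fun j _ => (pow_two _).symm
          · exact Finset.sum_congr rfl fun i _ => (Finset.mul_sum _ _ _).symm
  rw [this]

end SAVNS



/-- **Discrete energy relation with forcing for the semi-discrete SAV scheme**
(identity (2.17)): if `(u^{n+1}, p^{n+1/2}, q^{n+1})`, with `u^{n+1} ∈ H¹₀(Ω)^d`, solves one
step of the semi-discrete SAV/Crank–Nicolson scheme and `uⁿ` is divergence-free, then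
`((q^{n+1})² - (qⁿ)²)/Δt + ν ‖∇u^{n+1/2}‖²_{L²(Ω)} = (f^{n+1/2}, u^{n+1/2})`
with `u^{n+1/2} = (uⁿ + u^{n+1})/2`. -/
theorem SAVNS.semi_discrete_energy_relation
    (d : ℕ) (hd : d = 2 ∨ d = 3)
    (Ω : Set (Fin d → ℝ)) (hΩo : IsOpen Ω) (hΩb : Bornology.IsBounded Ω)
    (ν δ Δt : ℝ) (hν : 0 < ν) (hδ : 0 < δ) (hΔt : 0 < Δt)
    (f un um uv : (Fin d → ℝ) → (Fin d → ℝ)) (p : (Fin d → ℝ) → ℝ) (qn qv : ℝ)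
    -- smoothness ("all functions are smooth enough")
    (hsm_un : ContDiff ℝ (⊤ : ℕ∞) un) (hsm_um : ContDiff ℝ (⊤ : ℕ∞) um)
    (hsm_uv : ContDiff ℝ (⊤ : ℕ∞) uv) (hsm_p : ContDiff ℝ (⊤ : ℕ∞) p) (hsm_f : Continuous f)
    -- `uⁿ, u^{n-1} ∈ H¹₀(Ω)^d`, `uⁿ` divergence-free
    (hbc_un : ∀ x ∈ frontier Ω, ∀ i, un x i = 0)
    (hbc_um : ∀ x ∈ frontier Ω, ∀ i, um x i = 0)
    (hdiv_un : ∀ x ∈ Ω, SAVNS.vdiv un x = 0)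
    -- one step of the scheme
    (hstep : SAVNS.SAVStep Ω ν δ Δt f un um uv p qn qv) :
    (qv ^ 2 - qn ^ 2) / Δt + ν * ∫ x in Ω, SAVNS.gradSq (SAVNS.uhalf un uv) x
      = SAVNS.ipL2 Ω f (SAVNS.uhalf un uv) := by
  classical
  obtain ⟨hq, hmom, hsav, hdiv_uv, _, hbc_uv⟩ := hstep
  set w := SAVNS.uhalf un uv with hwdef
  set ut := SAVNS.utilde un um with hutdef
  set E0 := Real.sqrt (SAVNS.energy Ω ut + δ) with hE0def
  set c1 := (qn + qv) / 2 / E0 with hc1def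
  -- component smoothness
  have hunc : ∀ i, ContDiff ℝ (⊤ : ℕ∞) (fun x => un x i) := fun i => by
    exact (ContinuousLinearMap.proj i).contDiff.comp hsm_un
  have humc : ∀ i, ContDiff ℝ (⊤ : ℕ∞) (fun x => um x i) := fun i => by
    exact (ContinuousLinearMap.proj i).contDiff.comp hsm_um
  have huvc : ∀ i, ContDiff ℝ (⊤ : ℕ∞) (fun x => uv x i) := fun i => by
    exact (ContinuousLinearMap.proj i).contDiff.comp hsm_uv
  have hwc : ∀ i, ContDiff ℝ (⊤ : ℕ∞) (fun x => w x i) := fun i =>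
    ((hunc i).add (huvc i)).div_const 2
  have hutc : ∀ i, ContDiff ℝ (⊤ : ℕ∞) (fun x => ut x i) := fun i =>
    ((contDiff_const.mul (hunc i)).sub (humc i)).div_const 2
  have hwbc : ∀ x ∈ frontier Ω, ∀ i, w x i = 0 := fun x hx i => by
    show (un x i + uv x i) / 2 = 0
    rw [hbc_un x hx i, hbc_uv x hx i]; norm_num
  -- divergence of w vanishes on Ω
  have hpdavg : ∀ (g h : (Fin d → ℝ) → ℝ), ContDiff ℝ (⊤ : ℕ∞) g → ContDiff ℝ (⊤ : ℕ∞) h →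
      ∀ (i : Fin d) (x : Fin d → ℝ),
      SAVNS.pd (fun y => (g y + h y) / 2) i x
        = (SAVNS.pd g i x + SAVNS.pd h i x) / 2 := by
    intro g h hg hh i x
    unfold SAVNS.pd
    have hfe : (fun y => (g y + h y) / 2) = fun y => (1/2 : ℝ) * (g y + h y) := by
      funext y; ring
    rw [hfe, fderiv_const_mul (a := fun y => g y + h y) (((hg.differentiable (by simp)).differentiableAt).add
      ((hh.differentiable (by simp)).differentiableAt)),
      fderiv_fun_add ((hg.differentiable (by simp)).differentiableAt)
      ((hh.differentiable (by simp)).differentiableAt)]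
    simp
    ring
  have hdivw : ∀ x ∈ Ω, SAVNS.vdiv w x = 0 := by
    intro x hx
    have h1 := hdiv_un x hx
    have h2 := hdiv_uv x hx
    unfold SAVNS.vdiv at h1 h2 ⊢
    have hcomp : ∀ i : Fin d, SAVNS.pd (fun y => w y i) i x
        = (SAVNS.pd (fun y => un y i) i x + SAVNS.pd (fun y => uv y i) i x) / 2 :=
      fun i => hpdavg _ _ (hunc i) (huvc i) i x
    calc ∑ i, SAVNS.pd (fun y => w y i) i x
        = ∑ i, (SAVNS.pd (fun y => un y i) i x + SAVNS.pd (fun y => uv y i) i x) / 2 :=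
          Finset.sum_congr rfl fun i _ => hcomp i
      _ = ((∑ i, SAVNS.pd (fun y => un y i) i x)
            + ∑ i, SAVNS.pd (fun y => uv y i) i x) / 2 := by
          rw [← Finset.sum_div, Finset.sum_add_distrib]
      _ = 0 := by rw [h1, h2]; norm_num
  -- pointwise integrand names
  set T1 : (Fin d → ℝ) → ℝ := fun x => ∑ i, (uv x i - un x i) / Δt * w x i with hT1
  set T2 : (Fin d → ℝ) → ℝ := fun x => ∑ i, SAVNS.conv ut ut x i * w x i with hT2
  set T3 : (Fin d → ℝ) → ℝ := fun x => ∑ i, SAVNS.lap (fun y => w y i) x * w x i with hT3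
  set T4 : (Fin d → ℝ) → ℝ := fun x => ∑ i, SAVNS.pd p i x * w x i with hT4
  -- continuity
  have hcT1 : Continuous T1 := continuous_finset_sum _ fun i _ =>
    (((huvc i).continuous.sub (hunc i).continuous).div_const Δt).mul (hwc i).continuous
  have hcT2 : Continuous T2 := continuous_finset_sum _ fun i _ =>
    (continuous_finset_sum _ fun j _ =>
      (hutc j).continuous.mul (SAVNS.contDiff_pd (hutc i) j).continuous).mul (hwc i).continuous
  have hclap : ∀ i, Continuous (SAVNS.lap (fun y => w y i)) := fun i =>
    continuous_finset_sum _ fun j _ =>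
      (SAVNS.contDiff_pd (SAVNS.contDiff_pd (hwc i) j) j).continuous
  have hcT3 : Continuous T3 := continuous_finset_sum _ fun i _ =>
    (hclap i).mul (hwc i).continuous
  have hcT4 : Continuous T4 := continuous_finset_sum _ fun i _ =>
    (SAVNS.contDiff_pd hsm_p i).continuous.mul (hwc i).continuous
  have hcG : Continuous (SAVNS.gradSq w) := continuous_finset_sum _ fun i _ =>
    continuous_finset_sum _ fun j _ => (SAVNS.contDiff_pd (hwc i) j).continuous.pow 2
  -- integrability
  have hiT1 := SAVNS.integrableOn_of_continuous hΩb hcT1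
  have hiT2 := SAVNS.integrableOn_of_continuous hΩb hcT2
  have hiT3 := SAVNS.integrableOn_of_continuous hΩb hcT3
  have hiT4 := SAVNS.integrableOn_of_continuous hΩb hcT4
  have hiG := SAVNS.integrableOn_of_continuous hΩb hcG
  -- pointwise identity from the momentum equation
  have hpt : ∀ x ∈ Ω, T1 x + c1 * T2 x - ν * T3 x + T4 x = ∑ i, f x i * w x i := by
    intro x hx
    have hLHS : T1 x + c1 * T2 x - ν * T3 x + T4 x
        = ∑ i, ((uv x i - un x i) / Δt + c1 * SAVNS.conv ut ut x i
            - ν * SAVNS.lap (fun y => w y i) x + SAVNS.pd p i x) * w x i := by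
      simp only [hT1, hT2, hT3, hT4, Finset.mul_sum, ← Finset.sum_add_distrib,
        ← Finset.sum_sub_distrib]
      exact Finset.sum_congr rfl fun i _ => by ring
    rw [hLHS]
    exact Finset.sum_congr rfl fun i _ => by rw [hmom x hx i]
  -- integral of LHS splits
  have hsplit : ∫ x in Ω, (T1 x + c1 * T2 x - ν * T3 x + T4 x)
      = (∫ x in Ω, T1 x) + c1 * (∫ x in Ω, T2 x) - ν * (∫ x in Ω, T3 x)
        + ∫ x in Ω, T4 x := by
    have i2c : IntegrableOn (fun x => c1 * T2 x) Ω := hiT2.const_mul c1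
    have i3c : IntegrableOn (fun x => ν * T3 x) Ω := hiT3.const_mul ν
    have iA : IntegrableOn (fun x => T1 x + c1 * T2 x) Ω := hiT1.add i2c
    have iB : IntegrableOn (fun x => T1 x + c1 * T2 x - ν * T3 x) Ω := iA.sub i3c
    calc ∫ x in Ω, (T1 x + c1 * T2 x - ν * T3 x + T4 x)
        = (∫ x in Ω, (T1 x + c1 * T2 x - ν * T3 x)) + ∫ x in Ω, T4 x :=
          integral_add iB hiT4
      _ = (∫ x in Ω, (T1 x + c1 * T2 x)) - (∫ x in Ω, ν * T3 x) + ∫ x in Ω, T4 x := by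
          rw [integral_sub iA i3c]
      _ = (∫ x in Ω, T1 x) + (∫ x in Ω, c1 * T2 x) - (∫ x in Ω, ν * T3 x)
            + ∫ x in Ω, T4 x := by
          rw [integral_add hiT1 i2c]
      _ = (∫ x in Ω, T1 x) + c1 * (∫ x in Ω, T2 x) - ν * (∫ x in Ω, T3 x)
            + ∫ x in Ω, T4 x := by
          rw [integral_const_mul, integral_const_mul]
  -- main integral identity
  have hmain : (∫ x in Ω, T1 x) + c1 * (∫ x in Ω, T2 x) - ν * (∫ x in Ω, T3 x)
      + ∫ x in Ω, T4 x = SAVNS.ipL2 Ω f w := by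
    rw [← hsplit]
    exact setIntegral_congr_fun hΩo.measurableSet hpt
  -- pressure term vanishes
  have hT4z : ∫ x in Ω, T4 x = 0 :=
    SAVNS.integral_gradp_dot_zero Ω hΩo hΩb p hsm_p w hwc hwbc hdivw
  -- viscous term
  have hT3e : ∫ x in Ω, T3 x = - ∫ x in Ω, SAVNS.gradSq w x := by
    have hB := SAVNS.integral_lap_dot Ω hΩo hΩb w hwc hwbc
    have hiL : IntegrableOn (fun x => ∑ i, w x i * SAVNS.lap (fun y => w y i) x) Ω :=
      SAVNS.integrableOn_of_continuous hΩb (continuous_finset_sum _ fun i _ =>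
        (hwc i).continuous.mul (hclap i))
    rw [integral_add hiG hiL] at hB
    have : ∫ x in Ω, (∑ i, w x i * SAVNS.lap (fun y => w y i) x) = ∫ x in Ω, T3 x := by
      refine setIntegral_congr_fun hΩo.measurableSet fun x _ => ?_
      exact Finset.sum_congr rfl fun i _ => mul_comm _ _
    rw [this] at hB
    linarith
  -- SAV identity
  have hQ : qn + qv ≠ 0 := fun h => hq (by rw [h]; norm_num)
  have hI1 : (∫ x in Ω, T1 x) = SAVNS.ipL2 Ω (fun y i => (uv y i - un y i) / Δt) w := rfl
  have hI2 : (∫ x in Ω, T2 x) = SAVNS.ipL2 Ω (SAVNS.conv ut ut) w := rfl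
  have hkey : (qv ^ 2 - qn ^ 2) / Δt = (∫ x in Ω, T1 x) + c1 * ∫ x in Ω, T2 x := by
    rw [hI1, hI2]
    calc (qv ^ 2 - qn ^ 2) / Δt = ((qv - qn) / Δt) * (qn + qv) := by ring
      _ = ((1 / (2 * ((qn + qv) / 2))) *
            SAVNS.ipL2 Ω (fun y i => (uv y i - un y i) / Δt) w
          + (1 / (2 * E0)) * SAVNS.ipL2 Ω (SAVNS.conv ut ut) w) * (qn + qv) := by
          rw [hsav]
      _ = ((qn + qv)⁻¹ * (qn + qv)) * SAVNS.ipL2 Ω (fun y i => (uv y i - un y i) / Δt) w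
          + ((qn + qv) / 2 / E0) * SAVNS.ipL2 Ω (SAVNS.conv ut ut) w := by
          rw [div_div, div_eq_mul_inv]
          have h2 : 2 * ((qn + qv) / 2) = qn + qv := by ring
          rw [h2]
          ring
      _ = SAVNS.ipL2 Ω (fun y i => (uv y i - un y i) / Δt) w
          + c1 * SAVNS.ipL2 Ω (SAVNS.conv ut ut) w := by
          rw [inv_mul_cancel₀ hQ, one_mul, hc1def]
  rw [← hkey, hT4z, hT3e] at hmain
  linarith
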